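/- arXiv:0811.0702 — 5 statements merged into one kernel-verified Lean document; each statement's English description precedes it below -/
import Mathlib

section
/- Let z : X^n → ℂ with Σ_k |z_k|² = 1 be the coefficients of a state of n qubits in the computational basis, where X = {0,1}, and let A ⊆ {1,…,n}. Then the purity of the reduced state on the qubits in A equals π_A(z) = Σ_{k,h ∈ X^n} z_k · z_{k⊕h} · conj(z_{k⊕h_A}) · conj(z_{k⊕h_Ā}), where ⊕ is bitwise XOR, h_A is h with all components outside A set to 0, and h_Ā is h with all components inside A set to 0. -/
open Finset

/-- Reduced density matrix of an `n`-qubit pure state (with coefficients `z` in the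
computational basis, qubits labelled by `Fin n` and basis elements by `Fin n → Bool`)
on the subset `A` of qubits. -/
noncomputable def rhoQ (n : ℕ) (A : Finset (Fin n)) (z : (Fin n → Bool) → ℂ) :
    Matrix ({i // i ∈ A} → Bool) ({i // i ∈ A} → Bool) ℂ :=
  fun ℓ ℓ' => ∑ m : {i // i ∉ A} → Bool,
    z (fun i => if h : i ∈ A then ℓ ⟨i, h⟩ else m ⟨i, h⟩) *
      star (z (fun i => if h : i ∈ A then ℓ' ⟨i, h⟩ else m ⟨i, h⟩))

/-!
Splitting each basis label into its bits on `A` and off `A` makes `ρ_A` the reduced density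
matrix of a bipartite vector, whose purity is
`∑_{k,k'} z_k z_{k'} conj(z_{k'_A k_Ā}) conj(z_{k_A k'_Ā})`:
the two conjugated labels swap the `A`-bits of `k` and `k'`. Substituting `k' = k ⊕ h` turns them
into `k ⊕ h_A` and `k ⊕ h_Ā`.
-/

section ReducedDensity

variable {α β R : Type*} [Fintype α] [Fintype β] [CommSemiring R] [StarRing R]

def reducedDensity (f : α × β → R) : Matrix α α R :=
  Matrix.of fun a a' => ∑ b, f (a, b) * star (f (a', b))

theorem trace_reducedDensity_mul_self (f : α × β → R) :
    Matrix.trace (reducedDensity f * reducedDensity f) =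
      ∑ p, ∑ q, f p * f q * star (f (q.1, p.2)) * star (f (p.1, q.2)) := by
  simp only [Matrix.trace, Matrix.diag_apply, Matrix.mul_apply, reducedDensity, Matrix.of_apply,
    Finset.sum_mul_sum, Fintype.sum_prod_type]
  refine Finset.sum_congr rfl fun a _ => ?_
  rw [Finset.sum_comm]
  refine Finset.sum_congr rfl fun b _ => Finset.sum_congr rfl fun a' _ =>
    Finset.sum_congr rfl fun b' _ => by ring

end ReducedDensity

theorem Equiv.piEquivPiSubtypeProd_symm_fst_snd {ι β : Type*} (s : Finset ι)
    [DecidablePred (· ∈ s)] (k k' : ι → β) :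
    (Equiv.piEquivPiSubtypeProd (· ∈ s) fun _ => β).symm
        ((Equiv.piEquivPiSubtypeProd (· ∈ s) fun _ => β) k' |>.1,
          (Equiv.piEquivPiSubtypeProd (· ∈ s) fun _ => β) k |>.2) =
      s.piecewise k' k := by
  funext i
  by_cases hi : i ∈ s <;> simp [Equiv.piEquivPiSubtypeProd, hi]

theorem rhoQ_eq_reducedDensity (n : ℕ) (A : Finset (Fin n)) (z : (Fin n → Bool) → ℂ) :
    rhoQ n A z =
      reducedDensity (z ∘ (Equiv.piEquivPiSubtypeProd (· ∈ A) fun _ => Bool).symm) :=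
  rfl

theorem trace_rhoQ_sq (n : ℕ) (A : Finset (Fin n)) (z : (Fin n → Bool) → ℂ) :
    Matrix.trace (rhoQ n A z ^ 2) =
      ∑ k, ∑ k', z k * z k' * star (z (A.piecewise k' k)) * star (z (A.piecewise k k')) := by
  set e := Equiv.piEquivPiSubtypeProd (· ∈ A) fun _ : Fin n => Bool
  rw [rhoQ_eq_reducedDensity, sq, trace_reducedDensity_mul_self]
  refine Fintype.sum_equiv e.symm _ _ fun p => Fintype.sum_equiv e.symm _ _ fun q => ?_
  simp only [Function.comp_apply, ← Equiv.piEquivPiSubtypeProd_symm_fst_snd, e,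
    Equiv.apply_symm_apply]

variable {ι : Type*}

theorem Fintype.sum_xor_left {M : Type*} [Fintype ι] [DecidableEq ι] [AddCommMonoid M]
    (k : ι → Bool) (f : (ι → Bool) → M) :
    ∑ k', f k' = ∑ h : ι → Bool, f fun i => (k i).xor (h i) :=
  (Fintype.sum_equiv
    (Function.Involutive.toPerm (fun h i => (k i).xor (h i)) fun h => by funext i; simp)
    _ _ fun _ => rfl).symm

variable (s : Finset ι) [DecidablePred (· ∈ s)] (k h : ι → Bool)

theorem Finset.piecewise_xor_self :
    s.piecewise (fun i => (k i).xor (h i)) k =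
      fun i => (k i).xor (if i ∈ s then h i else false) := by
  funext i
  by_cases hi : i ∈ s <;> simp [hi]

theorem Finset.piecewise_self_xor :
    s.piecewise k (fun i => (k i).xor (h i)) =
      fun i => (k i).xor (if i ∈ s then false else h i) := by
  funext i
  by_cases hi : i ∈ s <;> simp [hi]

theorem purity_xor_form_general (n : ℕ) (A : Finset (Fin n)) (z : (Fin n → Bool) → ℂ) :
    Matrix.trace (rhoQ n A z ^ 2) =
      ∑ k : Fin n → Bool, ∑ h : Fin n → Bool,
        z k * z (fun i => Bool.xor (k i) (h i)) *
          star (z (fun i => Bool.xor (k i) (if i ∈ A then h i else false))) *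
          star (z (fun i => Bool.xor (k i) (if i ∈ A then false else h i))) := by
  rw [trace_rhoQ_sq]
  refine Finset.sum_congr rfl fun k _ => ?_
  rw [Fintype.sum_xor_left k]
  simp only [Finset.piecewise_xor_self, Finset.piecewise_self_xor]

/-- Fourier (XOR) expression of the purity of a subset `A` of qubits:
`Tr(ρ_A²) = ∑_{k,h} z_k z_{k⊕h} conj(z_{k⊕h_A}) conj(z_{k⊕h_Ā})`,
where `h_A` is `h` with components outside `A` set to `0` and
`h_Ā` is `h` with components inside `A` set to `0`. -/
theorem purity_xor_form (n : ℕ) (A : Finset (Fin n)) (z : (Fin n → Bool) → ℂ)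
    (hz : ∑ k : Fin n → Bool, ‖z k‖ ^ 2 = 1) :
    Matrix.trace (rhoQ n A z ^ 2) =
      ∑ k : Fin n → Bool, ∑ h : Fin n → Bool,
        z k * z (fun i => Bool.xor (k i) (h i)) *
          star (z (fun i => Bool.xor (k i) (if i ∈ A then h i else false))) *
          star (z (fun i => Bool.xor (k i) (if i ∈ A then false else h i))) :=
  purity_xor_form_general n A z
end

section
/- For k, k', l, l' ∈ {0,1}^n, there exists a subset A ⊆ {1,…,n} with k_A = l'_A, k'_A = l_A, k_Ā = l_Ā, k'_Ā = l'_Ā if and only if ((k⊕l) ∨ (k'⊕l')) ∧ ((k⊕l') ∨ (k'⊕l)) = 0, where ⊕, ∨, ∧ are componentwise XOR, OR, AND on {0,1}^n. -/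
/-!
The condition splits over coordinates, and the choice of `A` is free in each coordinate:
`i` can be put in `A` or left out independently. So an admissible `A` exists iff every
coordinate is either swapped (`k i = l' i`, `k' i = l i`) or fixed (`k i = l i`, `k' i = l' i`),
and for single bits this disjunction is exactly the vanishing of the Boolean expression.
-/

theorem Finset.exists_forall_mem_and_forall_notMem_iff {ι : Type*} [Fintype ι]
    (P Q : ι → Prop) :
    (∃ A : Finset ι, (∀ i, i ∈ A → P i) ∧ (∀ i, i ∉ A → Q i)) ↔ ∀ i, P i ∨ Q i := by
  classical
  constructor
  · rintro ⟨A, hP, hQ⟩ i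
    by_cases hi : i ∈ A
    · exact .inl (hP i hi)
    · exact .inr (hQ i hi)
  · intro hPQ
    refine ⟨univ.filter fun i => ¬Q i, fun i hi => ?_, fun i hi => ?_⟩
    · exact (hPQ i).resolve_right (mem_filter.mp hi).2
    · simpa using hi

theorem Bool.swapped_or_fixed_iff (a a' b b' : Bool) :
    ((a = b' ∧ a' = b) ∨ (a = b ∧ a' = b')) ↔
      ((xor a b || xor a' b') && (xor a b' || xor a' b)) = false := by
  cases a <;> cases a' <;> cases b <;> cases b' <;> decide

/-- Characterization of the admissible set: there is a subset `A` with
`k_A = l'_A`, `k'_A = l_A`, `k_Ā = l_Ā`, `k'_Ā = l'_Ā` iff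
`((k⊕l) ∨ (k'⊕l')) ∧ ((k⊕l') ∨ (k'⊕l)) = 0` componentwise. -/
theorem admissible_set_characterization (n : ℕ) (k k' l l' : Fin n → Bool) :
    (∃ A : Finset (Fin n),
        (∀ i, i ∈ A → k i = l' i ∧ k' i = l i) ∧
        (∀ i, i ∉ A → k i = l i ∧ k' i = l' i)) ↔
    (∀ i, ((Bool.xor (k i) (l i) || Bool.xor (k' i) (l' i)) &&
           (Bool.xor (k i) (l' i) || Bool.xor (k' i) (l i))) = false) := by
  rw [Finset.exists_forall_mem_and_forall_notMem_iff]
  exact forall_congr' fun i => Bool.swapped_or_fixed_iff _ _ _ _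
end

section
/- Fix n ≥ 1, 1 ≤ n_A ≤ n−1, and l ∈ {0,1}^n. Define g(a,b;n_A) = [a∧b = 0]·ĝ(|a|,|b|;n_A) where ĝ(s,t;n_A) = (1/2)·C(n,n_A)^{-1}·[C(n−s−t,n_A−s)+C(n−s−t,n_A−t)]. Then Σ_{m ∈ {0,1}^n} g(l⊕m, m; n_A) = 1. -/
open Finset

/-- The coupling coefficient `ĝ(s,t;n_A)`. -/
noncomputable def ghat (n nA s t : ℕ) : ℚ :=
  (1 / 2) * ((Nat.choose n nA : ℚ))⁻¹ *
    ((if s ≤ nA then (Nat.choose (n - s - t) (nA - s) : ℚ) else 0) +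
     (if t ≤ nA then (Nat.choose (n - s - t) (nA - t) : ℚ) else 0))

/-- Hamming weight of a binary string. -/
def wt {n : ℕ} (a : Fin n → Bool) : ℕ := (Finset.univ.filter (fun i => a i = true)).card

/-- The coupling function `g(a,b;n_A) = [a ∧ b = 0]·ĝ(|a|,|b|;n_A)`. -/
noncomputable def gfun (n nA : ℕ) (a b : Fin n → Bool) : ℚ :=
  if ∀ i, (a i && b i) = false then ghat n nA (wt a) (wt b) else 0

lemma natkey (n nA k : ℕ) (hk : k ≤ n) (hA : nA ≤ n) :
    ∑ j ∈ Finset.range (k+1),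
      k.choose j * (if j ≤ nA then (n-k).choose (nA - j) else 0) = n.choose nA := by
  have h := Nat.add_choose_eq k (n-k) nA
  rw [Nat.add_sub_cancel' hk, Finset.Nat.sum_antidiagonal_eq_sum_range_succ_mk] at h
  rw [h]
  rw [show ∑ j ∈ Finset.range (k+1), k.choose j * (if j ≤ nA then (n-k).choose (nA - j) else 0)
      = ∑ j ∈ Finset.range (n+1), k.choose j * (if j ≤ nA then (n-k).choose (nA - j) else 0) from
    Finset.sum_subset (Finset.range_subset_range.mpr (by omega)) (by
      intro j hj hj'
      simp only [Finset.mem_range] at hj hj'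
      rw [Nat.choose_eq_zero_of_lt (by omega), Nat.zero_mul])]
  rw [show ∑ i ∈ Finset.range (nA+1), k.choose i * (n-k).choose (nA - i)
      = ∑ i ∈ Finset.range (nA+1), k.choose i * (if i ≤ nA then (n-k).choose (nA - i) else 0) from
    Finset.sum_congr rfl (fun i hi => by
      rw [if_pos (by simp only [Finset.mem_range] at hi; omega)])]
  exact (Finset.sum_subset (Finset.range_subset_range.mpr (by omega)) (by
    intro j hj hj'
    simp only [Finset.mem_range] at hj hj'
    rw [if_neg (by omega), Nat.mul_zero])).symm

lemma natkey' (n nA k : ℕ) (hk : k ≤ n) (hA : nA ≤ n) :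
    ∑ j ∈ Finset.range (k+1),
      k.choose j * (if k - j ≤ nA then (n-k).choose (nA - (k - j)) else 0) = n.choose nA := by
  rw [← natkey n nA k hk hA, ← Finset.sum_range_reflect
    (fun j => k.choose j * (if j ≤ nA then (n-k).choose (nA - j) else 0)) (k+1)]
  refine Finset.sum_congr rfl (fun j hj => ?_)
  simp only [Finset.mem_range] at hj
  rw [show k + 1 - 1 - j = k - j from by omega, Nat.choose_symm (by omega)]

lemma key (n nA k : ℕ) (hk : k ≤ n) (h1 : 1 ≤ nA) (h2 : nA ≤ n - 1) :
    ∑ j ∈ Finset.range (k+1), (k.choose j : ℚ) * ghat n nA (k - j) j = 1 := by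
  have hA : nA ≤ n := by omega
  have hC : (n.choose nA : ℚ) ≠ 0 :=
    Nat.cast_ne_zero.mpr (Nat.choose_pos hA).ne'
  have hterm : ∀ j ∈ Finset.range (k+1), (k.choose j : ℚ) * ghat n nA (k-j) j
      = (1/2) * (n.choose nA : ℚ)⁻¹ *
        (((k.choose j : ℚ) * (if k-j ≤ nA then ((n-k).choose (nA-(k-j)) : ℚ) else 0))
        + ((k.choose j : ℚ) * (if j ≤ nA then ((n-k).choose (nA-j) : ℚ) else 0))) := by
    intro j hj
    simp only [Finset.mem_range] at hj
    rw [ghat, show n - (k - j) - j = n - k from by omega]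
    ring
  rw [Finset.sum_congr rfl hterm, ← Finset.mul_sum, Finset.sum_add_distrib]
  have c1 : ∑ j ∈ Finset.range (k+1),
      ((k.choose j : ℚ) * (if k-j ≤ nA then ((n-k).choose (nA-(k-j)) : ℚ) else 0))
      = (n.choose nA : ℚ) := by
    rw [← natkey' n nA k hk hA]
    push_cast [Finset.sum_ite_eq]
    refine Finset.sum_congr rfl (fun j _ => ?_)
    split <;> push_cast <;> ring
  have c2 : ∑ j ∈ Finset.range (k+1),
      ((k.choose j : ℚ) * (if j ≤ nA then ((n-k).choose (nA-j) : ℚ) else 0))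
      = (n.choose nA : ℚ) := by
    rw [← natkey n nA k hk hA]
    push_cast
    refine Finset.sum_congr rfl (fun j _ => ?_)
    split <;> push_cast <;> ring
  rw [c1, c2]
  field_simp
  ring

/-- Normalization of the coupling function:
`∑_{m ∈ {0,1}^n} g(l⊕m, m; n_A) = 1`. -/
theorem gfun_sum_eq_one (n nA : ℕ) (hn : 1 ≤ n) (h1 : 1 ≤ nA) (h2 : nA ≤ n - 1)
    (l : Fin n → Bool) :
    ∑ m : Fin n → Bool, gfun n nA (fun i => Bool.xor (l i) (m i)) m = 1 := by
  classical
  set L : Finset (Fin n) := Finset.univ.filter (fun i => l i = true) with hL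
  have hk : L.card ≤ n := by
    simpa using (Finset.card_filter_le Finset.univ (fun i => l i = true))
  let e : Finset (Fin n) ≃ (Fin n → Bool) :=
    { toFun := fun S i => decide (i ∈ S)
      invFun := fun m => Finset.univ.filter (fun i => m i = true)
      left_inv := fun S => by ext i; simp
      right_inv := fun m => by funext i; simp }
  rw [← Equiv.sum_comp e (fun m => gfun n nA (fun i => Bool.xor (l i) (m i)) m)]
  have hstep : ∀ S : Finset (Fin n),
      gfun n nA (fun i => Bool.xor (l i) (e S i)) (e S) =
        if S ⊆ L then ghat n nA (L.card - S.card) S.card else 0 := by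
    intro S
    have hcond : (∀ i, (Bool.xor (l i) (e S i) && e S i) = false) ↔ S ⊆ L := by
      simp only [Finset.subset_iff, hL, Finset.mem_filter, Finset.mem_univ, true_and, e,
        Equiv.coe_fn_mk]
      refine forall_congr' fun i => ?_
      by_cases hi : i ∈ S <;> cases hli : l i <;> simp [hi, hli]
    rw [gfun]
    by_cases hsub : S ⊆ L
    · rw [if_pos (hcond.mpr hsub), if_pos hsub]
      have hwb : wt (e S) = S.card := by
        rw [wt]; congr 1; ext i; simp [e]
      have hwa : wt (fun i => Bool.xor (l i) (e S i)) = L.card - S.card := by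
        rw [wt, ← Finset.card_sdiff_of_subset hsub]
        congr 1
        ext i
        have := @hsub i
        simp only [Finset.mem_filter, Finset.mem_univ, true_and, Finset.mem_sdiff, hL,
          Finset.mem_filter, e, Equiv.coe_fn_mk] at this ⊢
        by_cases hi : i ∈ S <;> cases hli : l i <;> simp_all
      rw [hwa, hwb]
    · rw [if_neg (fun h => hsub (hcond.mp h)), if_neg hsub]
  rw [Finset.sum_congr rfl (fun S _ => hstep S), ← Finset.sum_filter]
  rw [show Finset.univ.filter (· ⊆ L) = L.powerset from by ext S; simp]
  rw [Finset.sum_powerset_apply_card (fun c => ghat n nA (L.card - c) c)]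
  simp only [nsmul_eq_mul]
  exact key n nA L.card hk h1 h2
end

section
/- Conversely, any function P(k) = 2^{−n} + Σ_{T ⊆ {1,…,n}, |T| > n/2} c_T · Π_{i∈T}(2k_i − 1) satisfies: Σ_k P(k) = 1 and for every A ⊆ {1,…,n} with |A| ≤ n/2 and every ℓ ∈ {0,1}^A, Σ_{k : k_A = ℓ} P(k) = 2^{−|A|}. -/
open Finset

lemma pi_sum_prod (n : ℕ) (h : Fin n → Bool → ℝ) :
    ∑ k : Fin n → Bool, ∏ i, h i (k i) = ∏ i, ∑ b, h i b := by
  rw [Finset.prod_univ_sum, Fintype.piFinset_univ]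

lemma filtered_sum_eq (n : ℕ) (A T : Finset (Fin n)) (ℓ : Fin n → Bool) :
    ∑ k ∈ Finset.univ.filter (fun k : Fin n → Bool => ∀ i ∈ A, k i = ℓ i),
      ∏ i ∈ T, (2 * (if k i = true then (1:ℝ) else 0) - 1)
    = ∏ i, ∑ b : Bool,
        ((if i ∈ A then (if b = ℓ i then (1:ℝ) else 0) else 1) *
         (if i ∈ T then 2 * (if b = true then (1:ℝ) else 0) - 1 else 1)) := by
  rw [← pi_sum_prod]
  rw [Finset.sum_filter]
  apply Finset.sum_congr rfl
  intro k _
  rw [Finset.prod_mul_distrib, Finset.prod_ite_mem, Finset.prod_ite_mem,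
    Finset.univ_inter, Finset.univ_inter]
  rw [Finset.prod_boole]
  by_cases h : ∀ i ∈ A, k i = ℓ i <;> simp [h]

lemma count_lemma (n : ℕ) (A : Finset (Fin n)) (ℓ : Fin n → Bool) :
    ∑ k ∈ Finset.univ.filter (fun k : Fin n → Bool => ∀ i ∈ A, k i = ℓ i),
      (1:ℝ) = 2 ^ (n - A.card) := by
  have := filtered_sum_eq n A ∅ ℓ
  simp only [Finset.prod_empty] at this
  rw [this]
  have : ∀ i : Fin n, (∑ b : Bool,
      ((if i ∈ A then (if b = ℓ i then (1:ℝ) else 0) else 1) *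
       (if i ∈ (∅ : Finset (Fin n)) then 2 * (if b = true then (1:ℝ) else 0) - 1 else 1)))
      = if i ∈ A then 1 else 2 := by
    intro i
    by_cases h : i ∈ A <;> cases hb : ℓ i <;> simp [h, Fintype.sum_bool]
  rw [Finset.prod_congr rfl (fun i _ => this i)]
  rw [Finset.prod_ite, Finset.prod_const, Finset.prod_const]
  simp [Finset.filter_mem_eq_inter, Finset.filter_not]
  rw [Finset.card_sdiff_of_subset (Finset.subset_univ A), Finset.card_univ, Fintype.card_fin]

lemma char_lemma (n : ℕ) (A T : Finset (Fin n)) (ℓ : Fin n → Bool)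
    (hT : ¬ T ⊆ A) :
    ∑ k ∈ Finset.univ.filter (fun k : Fin n → Bool => ∀ i ∈ A, k i = ℓ i),
      ∏ i ∈ T, (2 * (if k i = true then (1:ℝ) else 0) - 1) = 0 := by
  rw [filtered_sum_eq]
  obtain ⟨j, hjT, hjA⟩ := Finset.not_subset.mp hT
  apply Finset.prod_eq_zero (Finset.mem_univ j)
  simp [hjT, hjA, Fintype.sum_bool]

/-- Converse structure theorem: any function of the form
`P(k) = 2^{−n} + ∑_{|T| > n/2} c_T ∏_{i∈T}(2k_i−1)` sums to `1` and has all its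
marginals on sets of at most `n/2` coordinates uniform. -/
theorem perfect_mmes_population_converse (n : ℕ)
    (c : Finset (Fin n) → ℝ) (P : (Fin n → Bool) → ℝ)
    (hP : ∀ k, P k = ((2 : ℝ) ^ n)⁻¹ +
      ∑ T ∈ Finset.univ.filter (fun T : Finset (Fin n) => n < 2 * T.card),
        c T * ∏ i ∈ T, (2 * (if k i = true then (1 : ℝ) else 0) - 1)) :
    (∑ k : Fin n → Bool, P k = 1) ∧
    (∀ A : Finset (Fin n), 2 * A.card ≤ n → ∀ ℓ : Fin n → Bool,
      ∑ k ∈ Finset.univ.filter (fun k : Fin n → Bool => ∀ i ∈ A, k i = ℓ i), P k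
        = ((2 : ℝ) ^ A.card)⁻¹) := by
  have key : ∀ A : Finset (Fin n), 2 * A.card ≤ n → ∀ ℓ : Fin n → Bool,
      ∑ k ∈ Finset.univ.filter (fun k : Fin n → Bool => ∀ i ∈ A, k i = ℓ i), P k
        = ((2 : ℝ) ^ A.card)⁻¹ := by
    intro A hA ℓ
    have han : A.card ≤ n := le_trans (Nat.le_mul_of_pos_left _ (by norm_num)) hA
    simp only [hP]
    rw [Finset.sum_add_distrib]
    have h2 : ∑ k ∈ Finset.univ.filter (fun k : Fin n → Bool => ∀ i ∈ A, k i = ℓ i),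
        ∑ T ∈ Finset.univ.filter (fun T : Finset (Fin n) => n < 2 * T.card),
          c T * ∏ i ∈ T, (2 * (if k i = true then (1 : ℝ) else 0) - 1) = 0 := by
      rw [Finset.sum_comm]
      apply Finset.sum_eq_zero
      intro T hT
      rw [← Finset.mul_sum]
      have hTA : ¬ T ⊆ A := by
        intro hsub
        have := Finset.card_le_card hsub
        have hn : n < 2 * T.card := (Finset.mem_filter.mp hT).2
        omega
      rw [char_lemma n A T ℓ hTA, mul_zero]
    rw [h2, add_zero, Finset.sum_const, nsmul_eq_mul]
    have hc : (Finset.univ.filter (fun k : Fin n → Bool => ∀ i ∈ A, k i = ℓ i)).card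
        = 2 ^ (n - A.card) := by
      have := count_lemma n A ℓ
      rw [Finset.sum_const, nsmul_eq_mul, mul_one] at this
      exact_mod_cast this
    rw [hc]
    push_cast
    have h2n : (2:ℝ)^n = 2^(n - A.card) * 2^A.card := by
      rw [← pow_add, Nat.sub_add_cancel han]
    rw [h2n, mul_inv, ← mul_assoc, mul_inv_cancel₀ (by positivity), one_mul]
  refine ⟨?_, key⟩
  have := key ∅ (by simp) (fun _ => true)
  simpa using this
end

section
/- For n = 2 qubits, the potential of multipartite entanglement of a uniform state with phases ζ ∈ (S¹)^4 (i.e. z_k = ζ_k/2) equals π_ME(ζ) = 3/4 + (1/4)·Re(ζ_{00} ζ_{11} conj(ζ_{01}) conj(ζ_{10})). Consequently π_ME(ζ) = 1/2 if and only if ζ_{00}·ζ_{11} = −ζ_{01}·ζ_{10}. -/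
/-- Reduced density matrix of a two-qubit pure state on the first qubit. -/
noncomputable def rho1 (z : Bool → Bool → ℂ) : Matrix Bool Bool ℂ :=
  fun a a' => ∑ b : Bool, z a b * star (z a' b)

/-- Reduced density matrix of a two-qubit pure state on the second qubit. -/
noncomputable def rho2 (z : Bool → Bool → ℂ) : Matrix Bool Bool ℂ :=
  fun b b' => ∑ a : Bool, z a b * star (z a b')

/-- Potential of multipartite entanglement for `n = 2` qubits: average of the
purities of the two single-qubit subsystems. -/
noncomputable def piME2 (z : Bool → Bool → ℂ) : ℂ :=
  (Matrix.trace (rho1 z ^ 2) + Matrix.trace (rho2 z ^ 2)) / 2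

/-! Each reduced state of a two-qubit pure state is a Hermitian 2 × 2 matrix, so its purity is
`ρ₀₀² + ρ₁₁² + 2 |ρ₀₁|²`. For the uniform state both diagonal entries are `1/2`, and
`16 |ρ₀₁|² = |ζ₀₀ ζ̄₁₀ + ζ₀₁ ζ̄₁₁|² = 2 + 2 Re w` with `w = ζ₀₀ ζ₁₁ ζ̄₀₁ ζ̄₁₀`; the second qubit
yields the same `w`. Since `|w| = 1`, `Re w = -1` forces `w = -1`, i.e. `ζ₀₀ ζ₁₁ = -ζ₀₁ ζ₁₀`. -/

open ComplexConjugate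

lemma Complex.re_eq_neg_one_iff_of_norm_eq_one {w : ℂ} (hw : ‖w‖ = 1) : w.re = -1 ↔ w = -1 := by
  refine ⟨fun hre => ?_, fun h => by simp [h]⟩
  have him : w.im = 0 := by
    have h := Complex.normSq_apply w
    rw [Complex.normSq_eq_norm_sq, hw, hre] at h
    nlinarith
  exact Complex.ext (by simp [hre]) (by simp [him])

lemma Complex.mul_conj_eq_iff_of_norm_eq_one {u v : ℂ} (c : ℂ) (hv : ‖v‖ = 1) :
    u * conj v = c ↔ u = c * v := by
  have hvv : conj v * v = 1 := by simp [Complex.conj_mul', hv]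
  constructor
  · rintro rfl
    rw [mul_assoc, hvv, mul_one]
  · rintro rfl
    rw [mul_assoc, mul_comm v, hvv, mul_one]

lemma Complex.normSq_add_of_norm_eq_one {u v : ℂ} (hu : ‖u‖ = 1) (hv : ‖v‖ = 1) :
    Complex.normSq (u + v) = 2 + 2 * (u * conj v).re := by
  rw [Complex.normSq_add, Complex.normSq_eq_norm_sq, Complex.normSq_eq_norm_sq, hu, hv]
  norm_num

lemma Matrix.trace_sq_of_isHermitian_bool {A : Matrix Bool Bool ℂ} (hA : A.IsHermitian) :
    (A ^ 2).trace = A false false ^ 2 + A true true ^ 2 + 2 * Complex.normSq (A false true) := by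
  have hconj : A true false = conj (A false true) := (hA.apply true false).symm
  simp only [sq, Matrix.trace, Matrix.diag, Matrix.mul_apply, Fintype.sum_bool]
  rw [hconj, ← Complex.mul_conj]
  ring

lemma rho1_isHermitian (z : Bool → Bool → ℂ) : (rho1 z).IsHermitian := by
  ext a a'
  simp [rho1, mul_comm]

lemma rho1_apply_self (z : Bool → Bool → ℂ) (a : Bool) :
    rho1 z a a = ∑ b, (Complex.normSq (z a b) : ℂ) := by
  simp only [rho1, Complex.star_def, Complex.mul_conj]

lemma rho2_eq_rho1_swap (z : Bool → Bool → ℂ) : rho2 z = rho1 (fun b a => z a b) := rfl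

section Uniform

variable {ζ : Bool → Bool → ℂ}

lemma rho1_uniform_apply_self (hζ : ∀ a b, ‖ζ a b‖ = 1) (a : Bool) :
    rho1 (fun a b => ζ a b / 2) a a = 1 / 2 := by
  rw [rho1_apply_self, Fintype.sum_bool]
  simp [Complex.normSq_eq_norm_sq, hζ]
  norm_num

lemma normSq_rho1_uniform_apply_false_true (hζ : ∀ a b, ‖ζ a b‖ = 1) :
    Complex.normSq (rho1 (fun a b => ζ a b / 2) false true) =
      (1 + (ζ false false * ζ true true * star (ζ false true) * star (ζ true false)).re) / 8 := by
  have hρ : rho1 (fun a b => ζ a b / 2) false true =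
      (ζ false false * conj (ζ true false) + ζ false true * conj (ζ true true)) / 4 := by
    simp only [rho1, Fintype.sum_bool, star_div₀, Complex.star_def, map_ofNat]
    ring
  have hw : (ζ false false * conj (ζ true false)) * conj (ζ false true * conj (ζ true true)) =
      ζ false false * ζ true true * star (ζ false true) * star (ζ true false) := by
    rw [map_mul, Complex.conj_conj, Complex.star_def]
    ring
  rw [hρ, Complex.normSq_div, Complex.normSq_add_of_norm_eq_one (by simp [hζ]) (by simp [hζ]), hw]
  norm_num
  ring

lemma trace_rho1_uniform_sq (hζ : ∀ a b, ‖ζ a b‖ = 1) :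
    (rho1 (fun a b => ζ a b / 2) ^ 2).trace =
      3 / 4 + 1 / 4 *
        (((ζ false false * ζ true true * star (ζ false true) * star (ζ true false)).re : ℝ) : ℂ) := by
  rw [Matrix.trace_sq_of_isHermitian_bool (rho1_isHermitian _), rho1_uniform_apply_self hζ,
    rho1_uniform_apply_self hζ, normSq_rho1_uniform_apply_false_true hζ]
  push_cast
  ring

end Uniform

/-- For a uniform two-qubit state `z_k = ζ_k/2` with unimodular phases,
`π_ME(ζ) = 3/4 + (1/4)·Re(ζ₀₀ζ₁₁ conj(ζ₀₁) conj(ζ₁₀))`; consequently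
`π_ME(ζ) = 1/2` iff `ζ₀₀ζ₁₁ = −ζ₀₁ζ₁₀`. -/
theorem piME_two_qubit_uniform (ζ : Bool → Bool → ℂ)
    (hζ : ∀ a b, ‖ζ a b‖ = 1) :
    piME2 (fun a b => ζ a b / 2) =
      3 / 4 + (1 / 4) *
        (((ζ false false * ζ true true * star (ζ false true) * star (ζ true false)).re : ℝ) : ℂ) ∧
    (piME2 (fun a b => ζ a b / 2) = 1 / 2 ↔
      ζ false false * ζ true true = -(ζ false true * ζ true false)) := by
  set w := ζ false false * ζ true true * star (ζ false true) * star (ζ true false) with hw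
  have hpi : piME2 (fun a b => ζ a b / 2) = 3 / 4 + (1 / 4) * ((w.re : ℝ) : ℂ) := by
    have h₂ := trace_rho1_uniform_sq (ζ := fun b a => ζ a b) fun b a => hζ a b
    rw [mul_right_comm _ (star (ζ true false))] at h₂
    rw [piME2, rho2_eq_rho1_swap, trace_rho1_uniform_sq hζ, h₂]
    ring
  refine ⟨hpi, ?_⟩
  have hw' : w = ζ false false * ζ true true * conj (ζ false true * ζ true false) := by
    rw [hw, map_mul, Complex.star_def]
    ring
  have hwnorm : ‖w‖ = 1 := by simp [hw, hζ]
  calc piME2 (fun a b => ζ a b / 2) = 1 / 2 ↔ w.re = -1 := by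
        rw [hpi]
        constructor <;> intro h
        · exact_mod_cast (by linear_combination 4 * h : ((w.re : ℝ) : ℂ) = -1)
        · rw [h]; norm_num
    _ ↔ w = -1 := Complex.re_eq_neg_one_iff_of_norm_eq_one hwnorm
    _ ↔ _ := by
        rw [hw', Complex.mul_conj_eq_iff_of_norm_eq_one _ (by simp [hζ]), neg_one_mul]
end
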